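/- arXiv:2211.00997 — 5 statements merged into one kernel-verified Lean document; each statement's English description precedes it below -/
import Mathlib

section
/- Let H be a real Hilbert space, f : H → ℝ convex and Fréchet differentiable, g : H → ℝ ∪ {∞} proper convex lower semicontinuous, and P : H → H a bounded linear positive semidefinite self-adjoint operator. For u ∈ H, let v be a minimizer over w ∈ H of ⟨∇f(u), w⟩ − ⟨u, w⟩_P + (1/2)‖w‖_P² + g(w), and define D(u) = ⟨∇f(u), u − v⟩ + g(u) − g(v) − (1/2)‖u − v‖_P². Then for every minimizer u* of f + g, D(u) + (1/2)‖u − v‖_P² ≥ r(u) − ‖u − v‖_P · ‖u* − v‖_P, where r(u) = (f+g)(u) − inf(f+g) and ‖x‖_P² = ⟨x, Px⟩. -/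
open RealInnerProductSpace Set Filter Topology

/-!
The gradient inequality for `f` gives `f u - f u* ≤ ⟪∇f(u), u - u*⟫`, and the first-order
optimality condition for `v`, obtained by comparing `v` with `v + t (u* - v)` and letting
`t → 0⁺`, gives `g v - g u* ≤ ⟪∇f(u), u* - v⟫ - ⟪u - v, u* - v⟫_P`. Adding the two, what remains
is the cross term `⟪u - v, u* - v⟫_P`, which Cauchy–Schwarz for the semi-inner product
`⟪·, ·⟫_P` bounds by `‖u - v‖_P ‖u* - v‖_P`.
-/

theorem nonneg_of_forall_mul_add_sq_mul_nonneg {a b : ℝ}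
    (h : ∀ t ∈ Ioc (0 : ℝ) 1, 0 ≤ t * a + t ^ 2 * b) : 0 ≤ a := by
  have hlim : Tendsto (fun t : ℝ => a + t * b) (𝓝[>] 0) (𝓝 a) := by
    have hcont : Continuous (fun t : ℝ => a + t * b) := by fun_prop
    simpa using (hcont.tendsto 0).mono_left nhdsWithin_le_nhds
  refine ge_of_tendsto hlim ?_
  filter_upwards [Ioc_mem_nhdsGT zero_lt_one] with t ht
  refine nonneg_of_mul_nonneg_right ?_ ht.1
  linear_combination h t ht

section
variable {H : Type*} [NormedAddCommGroup H] [InnerProductSpace ℝ H] {T : H →ₗ[ℝ] H}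

theorem LinearMap.IsPositive.abs_inner_le_sqrt_mul_sqrt (hT : T.IsPositive) (x y : H) :
    |⟪x, T y⟫| ≤ √⟪x, T x⟫ * √⟪y, T y⟫ := by
  have hnonneg (z : H) : 0 ≤ ⟪z, T z⟫ := hT.re_inner_nonneg_right z
  have hsq := LinearMap.BilinForm.apply_mul_apply_le_of_forall_zero_le
    ((innerₗ H).compl₂ T) hnonneg x y
  simp only [LinearMap.compl₂_apply, innerₗ_apply_apply] at hsq
  rw [real_inner_comm (T x) y, hT.isSymmetric x y] at hsq
  rw [← Real.sqrt_mul (hnonneg x)]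
  exact Real.abs_le_sqrt (by rwa [sq])

theorem LinearMap.IsSymmetric.inner_add_smul_map_add_smul (hT : T.IsSymmetric) (x d : H) (t : ℝ) :
    ⟪x + t • d, T (x + t • d)⟫ = ⟪x, T x⟫ + 2 * t * ⟪T x, d⟫ + t ^ 2 * ⟪d, T d⟫ := by
  simp only [map_add, map_smul, inner_add_left, inner_add_right, real_inner_smul_left,
    real_inner_smul_right, ← hT x d, real_inner_comm (T x) d]
  ring

theorem ConvexOn.inner_gradient_sub_le [CompleteSpace H] {f : H → ℝ} {f' x : H}
    (hf : ConvexOn ℝ univ f) (hf' : HasGradientAt f f' x) (y : H) :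
    ⟪f', y - x⟫ ≤ f y - f x := by
  let ℓ : ℝ →ᵃ[ℝ] H := AffineMap.lineMap x y
  have hconv : ConvexOn ℝ univ (f ∘ ℓ) := by simpa using hf.comp_affineMap ℓ
  have hderiv : HasDerivAt (f ∘ ℓ) ⟪f', y - x⟫ 0 := by
    have hf'0 : HasGradientAt f f' (ℓ 0) := by simpa [ℓ] using hf'
    simpa using hf'0.hasFDerivAt.comp_hasDerivAt (0 : ℝ) AffineMap.hasDerivAt_lineMap
  simpa [slope, ℓ] using
    hconv.le_slope_of_hasDerivAt (mem_univ 0) (mem_univ 1) zero_lt_one hderiv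

theorem ConvexOn.inner_sub_add_sub_nonneg_of_isMinOn {g : H → ℝ} (hg : ConvexOn ℝ univ g)
    (hT : T.IsSymmetric) {c v : H}
    (hv : IsMinOn (fun w => ⟪c, w⟫ + (1 / 2) * ⟪w, T w⟫ + g w) univ v) (w : H) :
    0 ≤ ⟪c + T v, w - v⟫ + (g w - g v) := by
  refine nonneg_of_forall_mul_add_sq_mul_nonneg (b := (1 / 2) * ⟪w - v, T (w - v)⟫) ?_
  intro t ⟨ht0, ht1⟩
  have hmin := isMinOn_univ_iff.1 hv (v + t • (w - v))
  have hseg : g (v + t • (w - v)) ≤ (1 - t) * g v + t * g w := by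
    have := hg.2 (mem_univ v) (mem_univ w) (sub_nonneg.2 ht1) ht0.le (sub_add_cancel 1 t)
    simp only [smul_eq_mul] at this
    rwa [show (1 - t) • v + t • w = v + t • (w - v) by module] at this
  simp only [hT.inner_add_smul_map_add_smul, inner_add_right, real_inner_smul_right] at hmin
  rw [inner_add_left]
  linear_combination hmin + hseg

end

theorem hpgcg_lemma1_part1_general
    {H : Type*} [NormedAddCommGroup H] [InnerProductSpace ℝ H] [CompleteSpace H]
    (f : H → ℝ) (f' : H → H) (g : H → ℝ) (P : H →L[ℝ] H)
    (hf : ConvexOn ℝ Set.univ f)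
    (hf' : ∀ x, HasGradientAt f (f' x) x)
    (hg : ConvexOn ℝ Set.univ g)
    (hP_sa : ∀ x y : H, ⟪P x, y⟫ = ⟪x, P y⟫)
    (hP_pos : ∀ x : H, 0 ≤ ⟪x, P x⟫)
    (u v ustar : H)
    -- v is a minimizer of w ↦ ⟨∇f(u), w⟩ − ⟨u, w⟩_P + (1/2)‖w‖_P² + g(w)
    (hv : ∀ w : H,
      ⟪f' u, v⟫ - ⟪u, P v⟫ + (1/2) * ⟪v, P v⟫ + g v ≤
      ⟪f' u, w⟫ - ⟪u, P w⟫ + (1/2) * ⟪w, P w⟫ + g w) :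
    -- D(u) + (1/2)‖u − v‖_P² ≥ r(u) − ‖u − v‖_P ‖u* − v‖_P
    (⟪f' u, u - v⟫ + g u - g v - (1/2) * ⟪u - v, P (u - v)⟫)
      + (1/2) * ⟪u - v, P (u - v)⟫ ≥
    (f u + g u - (f ustar + g ustar))
      - Real.sqrt ⟪u - v, P (u - v)⟫ * Real.sqrt ⟪ustar - v, P (ustar - v)⟫ := by
  have hP : (P : H →ₗ[ℝ] H).IsPositive :=
    ⟨hP_sa, fun x => by simpa [real_inner_comm] using hP_pos x⟩
  have hgrad : ⟪f' u, ustar - u⟫ ≤ f ustar - f u := hf.inner_gradient_sub_le (hf' u) ustar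
  have hopt : 0 ≤ ⟪f' u, ustar - v⟫ - ⟪u - v, P (ustar - v)⟫ + (g ustar - g v) := by
    have h := hg.inner_sub_add_sub_nonneg_of_isMinOn hP.isSymmetric (c := f' u - P u)
      (isMinOn_univ_iff.2 fun w => by simpa [inner_sub_left, hP_sa] using hv w) ustar
    rwa [ContinuousLinearMap.coe_coe, sub_add, ← map_sub, inner_sub_left, hP_sa] at h
  have hcs : |⟪u - v, P (ustar - v)⟫| ≤ √⟪u - v, P (u - v)⟫ * √⟪ustar - v, P (ustar - v)⟫ :=
    hP.abs_inner_le_sqrt_mul_sqrt (u - v) (ustar - v)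
  have hsplit : ⟪f' u, u - v⟫ = ⟪f' u, ustar - v⟫ - ⟪f' u, ustar - u⟫ := by
    simp only [inner_sub_right]; ring
  linarith [(abs_le.1 hcs).1]

/-- Lemma 1, part 1 of the HPGCG analysis. -/
theorem hpgcg_lemma1_part1
    {H : Type*} [NormedAddCommGroup H] [InnerProductSpace ℝ H] [CompleteSpace H]
    (f : H → ℝ) (f' : H → H) (g : H → ℝ) (P : H →L[ℝ] H)
    (hf : ConvexOn ℝ Set.univ f)
    (hf' : ∀ x, HasGradientAt f (f' x) x)
    (hg : ConvexOn ℝ Set.univ g)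
    (hg_lsc : LowerSemicontinuous g)
    (hP_sa : ∀ x y : H, ⟪P x, y⟫ = ⟪x, P y⟫)
    (hP_pos : ∀ x : H, 0 ≤ ⟪x, P x⟫)
    (u v ustar : H)
    -- v is a minimizer of w ↦ ⟨∇f(u), w⟩ − ⟨u, w⟩_P + (1/2)‖w‖_P² + g(w)
    (hv : ∀ w : H,
      ⟪f' u, v⟫ - ⟪u, P v⟫ + (1/2) * ⟪v, P v⟫ + g v ≤
      ⟪f' u, w⟫ - ⟪u, P w⟫ + (1/2) * ⟪w, P w⟫ + g w)
    -- u* is a minimizer of f + g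
    (hustar : ∀ w : H, f ustar + g ustar ≤ f w + g w) :
    -- D(u) + (1/2)‖u − v‖_P² ≥ r(u) − ‖u − v‖_P ‖u* − v‖_P
    (⟪f' u, u - v⟫ + g u - g v - (1/2) * ⟪u - v, P (u - v)⟫)
      + (1/2) * ⟪u - v, P (u - v)⟫ ≥
    (f u + g u - (f ustar + g ustar))
      - Real.sqrt ⟪u - v, P (u - v)⟫ * Real.sqrt ⟪ustar - v, P (ustar - v)⟫ :=
  hpgcg_lemma1_part1_general f f' g P hf hf' hg hP_sa hP_pos u v ustar hv
end

section
/- With the setup of the hybrid proximal generalized conditional gradient analysis: for u ∈ H, v a minimizer of w ↦ ⟨∇f(u), w⟩ − ⟨u, w⟩_P + (1/2)‖w‖_P² + g(w), D(u) = ⟨∇f(u), u − v⟩ + g(u) − g(v) − (1/2)‖u − v‖_P², θ ∈ [0,1], and u* any minimizer of f + g, the inequality θ(D(u) + (1/2)‖u − v‖_P²) ≥ θ·r(u) − (1/2)‖u − u*‖_P² + (1/2)‖(u + θ(v − u)) − u*‖_P² + (θ/2)(2 − θ)‖u − v‖_P² holds, where r(u) = (f+g)(u) − inf(f+g). -/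
/-!
Expanding the `P`-square (with `P` symmetric), the `θ²` terms cancel and the inequality becomes
`θ ≥ 0` times the `θ`-free inequality
`r(u) + ⟪u - u*, v - u⟫_P + ‖v - u‖_P² ≤ ⟪∇f(u), u - v⟫ + g(u) - g(v)`.
This is the sum of the gradient inequality `f(u) + ⟪∇f(u), u* - u⟫ ≤ f(u*)` for convex `f` and
the first-order optimality condition of `v` for the proximal subproblem, tested at `u*`:
`g(v) - g(u*) ≤ ⟪∇f(u) + P(v - u), u* - v⟫`. Both come from one-sided directional derivatives
along the segment between the two points, using convexity of `f`, resp. `g`, on that segment.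
-/

open Set RealInnerProductSpace

section DirectionalDerivative

variable {E : Type*} [AddCommGroup E] [Module ℝ E]

theorem ConvexOn.apply_add_smul_sub_le {s : Set E} {f : E → ℝ} (hf : ConvexOn ℝ s f)
    {x y : E} (hx : x ∈ s) (hy : y ∈ s) {t : ℝ} (ht₀ : 0 ≤ t) (ht₁ : t ≤ 1) :
    f (x + t • (y - x)) ≤ f x + t * (f y - f x) := by
  have h := hf.2 hx hy (sub_nonneg.2 ht₁) ht₀ (sub_add_cancel 1 t)
  rw [smul_eq_mul, smul_eq_mul] at h
  calc f (x + t • (y - x)) = f ((1 - t) • x + t • y) := by congr 1; module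
    _ ≤ f x + t * (f y - f x) := by linarith

theorem ConvexOn.add_le_of_hasLineDerivAt {s : Set E} {f : E → ℝ} {f' : ℝ} {x y : E}
    (hf : ConvexOn ℝ s f) (hx : x ∈ s) (hy : y ∈ s) (hf' : HasLineDerivAt ℝ f f' x (y - x)) :
    f x + f' ≤ f y := by
  suffices f' ≤ f y - f x by linarith
  refine le_of_tendsto hf'.tendsto_slope_zero_right ?_
  filter_upwards [Ioo_mem_nhdsGT one_pos] with t ht
  rw [smul_eq_mul, inv_mul_le_iff₀ ht.1]
  linarith [hf.apply_add_smul_sub_le hx hy ht.1.le ht.2.le]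

theorem IsMinOn.sub_le_of_hasLineDerivAt_of_convexOn {s : Set E} {φ g : E → ℝ} {φ' : ℝ}
    {x y : E} (hmin : IsMinOn (φ + g) s x) (hφ : HasLineDerivAt ℝ φ φ' x (y - x))
    (hg : ConvexOn ℝ s g) (hx : x ∈ s) (hy : y ∈ s) :
    g x - g y ≤ φ' := by
  refine ge_of_tendsto hφ.tendsto_slope_zero_right ?_
  filter_upwards [Ioo_mem_nhdsGT one_pos] with t ht
  have hmem : x + t • (y - x) ∈ s := by
    simpa using hg.1.add_smul_sub_mem hx hy ⟨ht.1.le, ht.2.le⟩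
  have hle := hmin hmem
  simp only [mem_ofPred_eq, Pi.add_apply] at hle
  rw [smul_eq_mul, le_inv_mul_iff₀ ht.1]
  linarith [hg.apply_add_smul_sub_le hx hy ht.1.le ht.2.le]

end DirectionalDerivative

section InnerProduct

variable {H : Type*} [NormedAddCommGroup H] [InnerProductSpace ℝ H]

theorem HasGradientAt.hasLineDerivAt [CompleteSpace H] {f : H → ℝ} {f' x : H}
    (hf : HasGradientAt f f' x) (d : H) : HasLineDerivAt ℝ f ⟪f', d⟫ x d := by
  simpa using (hasGradientAt_iff_hasFDerivAt.1 hf).hasLineDerivAt d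

variable {P : H →L[ℝ] H}

theorem LinearMap.IsSymmetric.inner_add_smul_map_add_smul_s1 (hP : (P : H →ₗ[ℝ] H).IsSymmetric)
    (a b : H) (θ : ℝ) :
    ⟪a + θ • b, P (a + θ • b)⟫ = ⟪a, P a⟫ + 2 * θ * ⟪a, P b⟫ + θ ^ 2 * ⟪b, P b⟫ := by
  have hba : ⟪b, P a⟫ = ⟪a, P b⟫ := by rw [real_inner_comm]; exact hP a b
  simp only [map_add, map_smul, inner_add_left, inner_add_right, real_inner_smul_left,
    real_inner_smul_right, hba]
  ring

theorem LinearMap.IsSymmetric.hasGradientAt_half_inner_map_self [CompleteSpace H]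
    (hP : (P : H →ₗ[ℝ] H).IsSymmetric) (x : H) :
    HasGradientAt (fun w => (1 / 2) * ⟪w, P w⟫) (P x) x := by
  rw [hasGradientAt_iff_hasFDerivAt]
  refine (((hasFDerivAt_id x).inner ℝ P.hasFDerivAt).const_mul (1 / 2)).congr_fderiv ?_
  ext w
  have hsymm : ⟪P x, w⟫ = ⟪x, P w⟫ := hP x w
  have hsymm' : ⟪w, P x⟫ = ⟪x, P w⟫ := (real_inner_comm _ _).trans hsymm
  simp only [_root_.smul_apply, ContinuousLinearMap.comp_apply, ContinuousLinearMap.prod_apply,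
    ContinuousLinearMap.id_apply, fderivInnerCLM_apply, smul_eq_mul,
    InnerProductSpace.toDual_apply_apply, id_eq, hsymm, hsymm']
  ring

theorem LinearMap.IsSymmetric.hasGradientAt_prox_model [CompleteSpace H]
    (hP : (P : H →ₗ[ℝ] H).IsSymmetric) (a u x : H) :
    HasGradientAt (fun w => ⟪a, w⟫ - ⟪u, P w⟫ + (1 / 2) * ⟪w, P w⟫) (a + P (x - u)) x := by
  rw [hasGradientAt_iff_hasFDerivAt]
  refine (((innerSL ℝ a).hasFDerivAt.sub ((innerSL ℝ u).comp P).hasFDerivAt).add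
    (hasGradientAt_iff_hasFDerivAt.1 (hP.hasGradientAt_half_inner_map_self x))).congr_fderiv ?_
  ext w
  have hsymm : ⟪P u, w⟫ = ⟪u, P w⟫ := hP u w
  simp only [_root_.add_apply, _root_.sub_apply, coe_innerSL_apply,
    ContinuousLinearMap.comp_apply, InnerProductSpace.toDual_apply_apply, map_sub, map_add, hsymm]
  ring

end InnerProduct

theorem hpgcg_lemma1_part2_general
    {H : Type*} [NormedAddCommGroup H] [InnerProductSpace ℝ H] [CompleteSpace H]
    (f : H → ℝ) (f' : H → H) (g : H → ℝ) (P : H →L[ℝ] H)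
    (hf : ConvexOn ℝ Set.univ f)
    (hf' : ∀ x, HasGradientAt f (f' x) x)
    (hg : ConvexOn ℝ Set.univ g)
    (hP_sa : ∀ x y : H, ⟪P x, y⟫ = ⟪x, P y⟫)
    (u v ustar : H) (θ : ℝ) (hθ : θ ∈ Set.Icc (0:ℝ) 1)
    -- v is a minimizer of w ↦ ⟨∇f(u), w⟩ − ⟨u, w⟩_P + (1/2)‖w‖_P² + g(w)
    (hv : ∀ w : H,
      ⟪f' u, v⟫ - ⟪u, P v⟫ + (1/2) * ⟪v, P v⟫ + g v ≤
      ⟪f' u, w⟫ - ⟪u, P w⟫ + (1/2) * ⟪w, P w⟫ + g w) :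
    θ * ((⟪f' u, u - v⟫ + g u - g v - (1/2) * ⟪u - v, P (u - v)⟫)
        + (1/2) * ⟪u - v, P (u - v)⟫) ≥
    θ * (f u + g u - (f ustar + g ustar))
      - (1/2) * ⟪u - ustar, P (u - ustar)⟫
      + (1/2) * ⟪(u + θ • (v - u)) - ustar, P ((u + θ • (v - u)) - ustar)⟫
      + (θ/2) * (2 - θ) * ⟪u - v, P (u - v)⟫ := by
  have hP : (P : H →ₗ[ℝ] H).IsSymmetric := hP_sa
  have hgrad : f u + ⟪f' u, ustar - u⟫ ≤ f ustar :=
    hf.add_le_of_hasLineDerivAt trivial trivial ((hf' u).hasLineDerivAt _)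
  have hopt : g v - g ustar ≤ ⟪f' u + P (v - u), ustar - v⟫ :=
    IsMinOn.sub_le_of_hasLineDerivAt_of_convexOn (isMinOn_univ_iff.2 hv)
      ((hP.hasGradientAt_prox_model (f' u) u v).hasLineDerivAt _) hg trivial trivial
  have hreduced : f u + g u - (f ustar + g ustar) + ⟪u - ustar, P (v - u)⟫ + ⟪v - u, P (v - u)⟫
      ≤ ⟪f' u, u - v⟫ + g u - g v := by
    have h1 : ⟪f' u, ustar - v⟫ = ⟪f' u, ustar - u⟫ + ⟪f' u, u - v⟫ := by
      rw [← inner_add_right, sub_add_sub_cancel]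
    have h2 : ⟪P (v - u), ustar - v⟫ = -(⟪u - ustar, P (v - u)⟫ + ⟪v - u, P (v - u)⟫) := by
      rw [real_inner_comm, ← inner_add_left, ← inner_neg_left]
      congr 1
      abel
    rw [inner_add_left, h1, h2] at hopt
    linarith
  have hneg : ⟪u - v, P (u - v)⟫ = ⟪v - u, P (v - u)⟫ := by
    rw [← neg_sub v u, map_neg, inner_neg_neg]
  rw [add_sub_right_comm u, hP.inner_add_smul_map_add_smul_s1, hneg]
  linear_combination mul_le_mul_of_nonneg_left hreduced hθ.1

/-- Lemma 1, part 2 of the HPGCG analysis. -/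
theorem hpgcg_lemma1_part2
    {H : Type*} [NormedAddCommGroup H] [InnerProductSpace ℝ H] [CompleteSpace H]
    (f : H → ℝ) (f' : H → H) (g : H → ℝ) (P : H →L[ℝ] H)
    (hf : ConvexOn ℝ Set.univ f)
    (hf' : ∀ x, HasGradientAt f (f' x) x)
    (hg : ConvexOn ℝ Set.univ g)
    (hg_lsc : LowerSemicontinuous g)
    (hP_sa : ∀ x y : H, ⟪P x, y⟫ = ⟪x, P y⟫)
    (hP_pos : ∀ x : H, 0 ≤ ⟪x, P x⟫)
    (u v ustar : H) (θ : ℝ) (hθ : θ ∈ Set.Icc (0:ℝ) 1)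
    -- v is a minimizer of w ↦ ⟨∇f(u), w⟩ − ⟨u, w⟩_P + (1/2)‖w‖_P² + g(w)
    (hv : ∀ w : H,
      ⟪f' u, v⟫ - ⟪u, P v⟫ + (1/2) * ⟪v, P v⟫ + g v ≤
      ⟪f' u, w⟫ - ⟪u, P w⟫ + (1/2) * ⟪w, P w⟫ + g w)
    -- u* is a minimizer of f + g
    (hustar : ∀ w : H, f ustar + g ustar ≤ f w + g w) :
    θ * ((⟪f' u, u - v⟫ + g u - g v - (1/2) * ⟪u - v, P (u - v)⟫)
        + (1/2) * ⟪u - v, P (u - v)⟫) ≥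
    θ * (f u + g u - (f ustar + g ustar))
      - (1/2) * ⟪u - ustar, P (u - ustar)⟫
      + (1/2) * ⟪(u + θ • (v - u)) - ustar, P ((u + θ • (v - u)) - ustar)⟫
      + (θ/2) * (2 - θ) * ⟪u - v, P (u - v)⟫ :=
  hpgcg_lemma1_part2_general f f' g P hf hf' hg hP_sa u v ustar θ hθ hv
end

section
/- Let D(u) = ⟨∇f(u), u − v(u)⟩ + g(u) − g(v(u)) − (1/2)‖u − v(u)‖_P², where v(u) minimizes w ↦ ⟨∇f(u), w⟩ − ⟨u, w⟩_P + (1/2)‖w‖_P² + g(w). Then D(u) ≥ 0 for every u ∈ H, and D(u) = 0 if and only if u is a minimizer of f + g. -/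
/-!
Put `Φ w = ⟪∇f u, w⟫ + g w + ½‖w - u‖²_P`. Because `P` is symmetric, `Φ` differs from the
objective defining `v` by a constant, so `v` minimizes `Φ` and `D(u) = Φ u - Φ v ≥ 0`, with
equality iff `u` minimizes `Φ`. Both `½‖· - u‖²_P` and `f - (f u + ⟪∇f u, · - u⟫)` are
`o(‖· - u‖)` at `u`, and adding such a perturbation to a convex function does not change
whether `u` is a minimizer. Hence `u` minimizes `Φ` iff it minimizes `⟪∇f u, ·⟫ + g` iff it
minimizes `f + g`.
-/

open RealInnerProductSpace

section Minimization

open Set Filter Topology Asymptotics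

section Normed

variable {E : Type*} [NormedAddCommGroup E] [NormedSpace ℝ E] {φ ρ : E → ℝ} {u : E}

theorem Asymptotics.IsLittleO.tendsto_comp_add_smul_div (hρ : ρ =o[𝓝 u] (· - u)) (d : E) :
    Tendsto (fun t : ℝ => ρ (u + t • d) / t) (𝓝[>] 0) (𝓝 0) := by
  have hline : Tendsto (fun t : ℝ => u + t • d) (𝓝 0) (𝓝 u) := by
    simpa using (Continuous.tendsto (by fun_prop) 0 : Tendsto (fun t : ℝ => u + t • d) _ _)
  have hsmul : (fun t : ℝ => u + t • d - u) =O[𝓝 0] (fun t => t) :=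
    isBigO_iff.2 ⟨‖d‖, .of_forall fun t => by rw [add_sub_cancel_left, norm_smul, mul_comm]⟩
  exact ((hρ.comp_tendsto hline).trans_isBigO hsmul).tendsto_div_nhds_zero.mono_left
    nhdsWithin_le_nhds

-- On the segment from `u` to `w`, convexity makes `φ` drop at rate `φ u - φ w`,
-- which an `o(t)` perturbation cannot compensate.
theorem ConvexOn.isMinOn_of_isMinOn_add_isLittleO (hφ : ConvexOn ℝ univ φ)
    (hρ : ρ =o[𝓝 u] (· - u)) (hmin : IsMinOn (φ + ρ) univ u) : IsMinOn φ univ u := by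
  have hρu : ρ u = 0 := hρ.isBigO.eq_zero_imp.self_of_nhds (sub_self u)
  refine isMinOn_univ_iff.2 fun w => ?_
  have hslope : ∀ t ∈ Ioo (0 : ℝ) 1, φ u - φ w ≤ ρ (u + t • (w - u)) / t := by
    rintro t ⟨ht0, ht1⟩
    have hconv := hφ.2 (mem_univ u) (mem_univ w) (sub_nonneg.2 ht1.le) ht0.le (by ring)
    have hseg : (1 - t) • u + t • w = u + t • (w - u) := by
      rw [sub_smul, one_smul, smul_sub]; abel
    rw [hseg, smul_eq_mul, smul_eq_mul] at hconv
    have := isMinOn_univ_iff.1 hmin (u + t • (w - u))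
    rw [Pi.add_apply, Pi.add_apply, hρu] at this
    rw [le_div_iff₀ ht0]
    nlinarith
  have := ge_of_tendsto (hρ.tendsto_comp_add_smul_div (w - u)) <| by
    filter_upwards [Ioo_mem_nhdsGT zero_lt_one] with t ht using hslope t ht
  linarith

theorem ConvexOn.isMinOn_add_iff_of_nonneg_of_isLittleO (hφ : ConvexOn ℝ univ φ)
    (hρ₀ : ∀ w, 0 ≤ ρ w) (hρ : ρ =o[𝓝 u] (· - u)) :
    IsMinOn (φ + ρ) univ u ↔ IsMinOn φ univ u := by
  refine ⟨hφ.isMinOn_of_isMinOn_add_isLittleO hρ, fun hmin => isMinOn_univ_iff.2 fun w => ?_⟩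
  have hρu : ρ u = 0 := hρ.isBigO.eq_zero_imp.self_of_nhds (sub_self u)
  simpa [hρu] using add_le_add (isMinOn_univ_iff.1 hmin w) (hρ₀ w)

end Normed

section Hilbert

variable {H : Type*} [NormedAddCommGroup H] [InnerProductSpace ℝ H]

theorem isLittleO_inner_sub_apply_sub (P : H →L[ℝ] H) (u : H) :
    (fun w => ⟪w - u, P (w - u)⟫) =o[𝓝 u] (· - u) := by
  have hquad : (fun x => ⟪x, P x⟫) =O[𝓝 0] (fun x => ‖x‖ ^ 2) :=
    isBigO_iff.2 ⟨‖P‖, .of_forall fun x => by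
      rw [Real.norm_eq_abs, norm_pow, norm_norm, pow_two, ← mul_assoc]
      refine (abs_real_inner_le_norm _ _).trans ?_
      simpa [mul_comm] using mul_le_mul_of_nonneg_left (P.le_opNorm x) (norm_nonneg x)⟩
  exact (hquad.trans_isLittleO (isLittleO_norm_pow_id one_lt_two)).comp_tendsto
    (tendsto_sub_nhds_zero_iff.2 tendsto_id)

theorem inner_sub_apply_sub_of_isSymmetric {P : H →L[ℝ] H}
    (hP : ∀ x y, ⟪P x, y⟫ = ⟪x, P y⟫) (u w : H) :
    ⟪w - u, P (w - u)⟫ = ⟪w, P w⟫ - 2 * ⟪u, P w⟫ + ⟪u, P u⟫ := by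
  rw [map_sub, inner_sub_left, inner_sub_right, inner_sub_right, ← hP w u, real_inner_comm u]
  ring

variable [CompleteSpace H] {f g : H → ℝ} {G u : H}

theorem ConvexOn.add_inner_sub_le_of_hasGradientAt (hf : ConvexOn ℝ univ f)
    (hG : HasGradientAt f G u) (w : H) : f u + ⟪G, w - u⟫ ≤ f w := by
  have hρ : (fun w => f u + ⟪G, w - u⟫ - f w) =o[𝓝 u] (· - u) := by
    simpa [neg_sub, sub_sub, add_comm] using (hasGradientAt_iff_isLittleO.1 hG).neg_left
  have hφ : ConvexOn ℝ univ (fun w => f w - ⟪G, w⟫) :=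
    hf.sub ((innerₛₗ ℝ G).concaveOn convex_univ)
  have hmin := hφ.isMinOn_of_isMinOn_add_isLittleO hρ <| isMinOn_univ_iff.2 fun w => by
    simp only [Pi.add_apply, inner_sub_right]; linarith
  have := isMinOn_univ_iff.1 hmin w
  rw [inner_sub_right]
  linarith

theorem ConvexOn.isMinOn_add_iff_isMinOn_inner_add (hf : ConvexOn ℝ univ f)
    (hG : HasGradientAt f G u) (hg : ConvexOn ℝ univ g) :
    IsMinOn (f + g) univ u ↔ IsMinOn (fun w => ⟪G, w⟫ + g w) univ u := by
  constructor
  · intro hmin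
    have hφ : ConvexOn ℝ univ (fun w => ⟪G, w⟫ + g w) :=
      ((innerₛₗ ℝ G).convexOn convex_univ).add hg
    refine hφ.isMinOn_of_isMinOn_add_isLittleO (hasGradientAt_iff_isLittleO.1 hG) ?_
    refine isMinOn_univ_iff.2 fun w => ?_
    have := isMinOn_univ_iff.1 hmin w
    simp only [Pi.add_apply, inner_sub_right, sub_self] at this ⊢
    linarith
  · intro hmin
    refine isMinOn_univ_iff.2 fun w => ?_
    have := isMinOn_univ_iff.1 hmin w
    have := hf.add_inner_sub_le_of_hasGradientAt hG w
    simp only [Pi.add_apply, inner_sub_right] at this ⊢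
    linarith

end Hilbert

end Minimization

theorem hpgcg_lemma1_part3_general
    {H : Type*} [NormedAddCommGroup H] [InnerProductSpace ℝ H] [CompleteSpace H]
    (f : H → ℝ) (f' : H → H) (g : H → ℝ) (P : H →L[ℝ] H) (L : NNReal)
    (hf : ConvexOn ℝ Set.univ f)
    (hf' : ∀ x, HasGradientAt f (f' x) x)
    (hg : ConvexOn ℝ Set.univ g)
    (hP_sa : ∀ x y : H, ⟪P x, y⟫ = ⟪x, P y⟫)
    (hP_pos : ∀ x : H, 0 ≤ ⟪x, P x⟫)
    (u v : H)
    -- v = v(u) is a minimizer of w ↦ ⟨∇f(u), w⟩ − ⟨u, w⟩_P + (1/2)‖w‖_P² + g(w)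
    (hv : ∀ w : H,
      ⟪f' u, v⟫ - ⟪u, P v⟫ + (1/2) * ⟪v, P v⟫ + g v ≤
      ⟪f' u, w⟫ - ⟪u, P w⟫ + (1/2) * ⟪w, P w⟫ + g w) :
    0 ≤ ⟪f' u, u - v⟫ + g u - g v - (1/2) * ⟪u - v, P (u - v)⟫ ∧
    ((⟪f' u, u - v⟫ + g u - g v - (1/2) * ⟪u - v, P (u - v)⟫ = 0) ↔
      ∀ w : H, f u + g u ≤ f w + g w) := by
  set Φ : H → ℝ := (fun w => ⟪f' u, w⟫ + g w) + fun w => (1/2) * ⟪w - u, P (w - u)⟫ with hΦ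
  have hΦ_eq : ∀ w, Φ w =
      ⟪f' u, w⟫ - ⟪u, P w⟫ + (1/2) * ⟪w, P w⟫ + g w + (1/2) * ⟪u, P u⟫ := fun w => by
    rw [hΦ, Pi.add_apply, inner_sub_apply_sub_of_isSymmetric hP_sa]; ring
  have hv_min : IsMinOn Φ Set.univ v :=
    isMinOn_univ_iff.2 fun w => by rw [hΦ_eq, hΦ_eq]; linarith [hv w]
  have hD : ⟪f' u, u - v⟫ + g u - g v - (1/2) * ⟪u - v, P (u - v)⟫ = Φ u - Φ v := by
    rw [hΦ, Pi.add_apply, Pi.add_apply, sub_self, map_zero, inner_zero_left, ← neg_sub v u,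
      map_neg, inner_neg_neg, inner_neg_right, inner_sub_right]
    ring
  rw [hD, sub_nonneg, sub_eq_zero]
  refine ⟨isMinOn_univ_iff.1 hv_min u, ?_⟩
  calc Φ u = Φ v ↔ IsMinOn Φ Set.univ u :=
        ⟨fun h => isMinOn_univ_iff.2 fun w => h.le.trans (isMinOn_univ_iff.1 hv_min w),
          fun h => le_antisymm (isMinOn_univ_iff.1 h v) (isMinOn_univ_iff.1 hv_min u)⟩
    _ ↔ IsMinOn (fun w => ⟪f' u, w⟫ + g w) Set.univ u :=
        ConvexOn.isMinOn_add_iff_of_nonneg_of_isLittleO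
          (((innerₛₗ ℝ (f' u)).convexOn convex_univ).add hg)
          (fun _ => mul_nonneg one_half_pos.le (hP_pos _))
          ((isLittleO_inner_sub_apply_sub P u).const_mul_left _)
    _ ↔ IsMinOn (f + g) Set.univ u := (hf.isMinOn_add_iff_isMinOn_inner_add (hf' u) hg).symm
    _ ↔ ∀ w : H, f u + g u ≤ f w + g w := isMinOn_univ_iff

/-- Lemma 1, part 3 of the HPGCG analysis: D(u) ≥ 0, and D(u) = 0
iff u is a minimizer of f + g. -/
theorem hpgcg_lemma1_part3
    {H : Type*} [NormedAddCommGroup H] [InnerProductSpace ℝ H] [CompleteSpace H]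
    (f : H → ℝ) (f' : H → H) (g : H → ℝ) (P : H →L[ℝ] H) (L : NNReal)
    (hf : ConvexOn ℝ Set.univ f)
    (hf' : ∀ x, HasGradientAt f (f' x) x)
    (hf'_lip : LipschitzWith L f')
    (hg : ConvexOn ℝ Set.univ g)
    (hg_lsc : LowerSemicontinuous g)
    (hP_sa : ∀ x y : H, ⟪P x, y⟫ = ⟪x, P y⟫)
    (hP_pos : ∀ x : H, 0 ≤ ⟪x, P x⟫)
    (u v : H)
    -- v = v(u) is a minimizer of w ↦ ⟨∇f(u), w⟩ − ⟨u, w⟩_P + (1/2)‖w‖_P² + g(w)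
    (hv : ∀ w : H,
      ⟪f' u, v⟫ - ⟪u, P v⟫ + (1/2) * ⟪v, P v⟫ + g v ≤
      ⟪f' u, w⟫ - ⟪u, P w⟫ + (1/2) * ⟪w, P w⟫ + g w) :
    0 ≤ ⟪f' u, u - v⟫ + g u - g v - (1/2) * ⟪u - v, P (u - v)⟫ ∧
    ((⟪f' u, u - v⟫ + g u - g v - (1/2) * ⟪u - v, P (u - v)⟫ = 0) ↔
      ∀ w : H, f u + g u ≤ f w + g w) :=
  hpgcg_lemma1_part3_general f f' g P L hf hf' hg hP_sa hP_pos u v hv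
end

section
/- Let {u^k} be generated by the HPGCG iteration u^{k+1} = u^k + θ_k(v^k − u^k) with v^k = v(u^k) and step-size θ_k = min(1, (D(u^k) + (1/2)‖u^k − v^k‖_P²) / (2 D_f(u^k, v^k))). Then for all k ≥ 0, r(u^{k+1}) − r(u^k) ≤ −(θ_k/2)(D(u^k) + (1/2)‖u^k − v^k‖_P²), where r(u) = (f+g)(u) − inf(f+g). -/
/-!
Convexity of `g` and the two standing properties of `D_f` give, along the segment
`u + θ (v - u)`, the quadratic model `(f + g)(u + θ (v - u)) ≤ (f + g)(u) - θ Δ + θ² D_f(u, v)`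
with `Δ = ⟪∇f u, u - v⟫ + g u - g v`. Comparing `v` with `w = u` in the subproblem defining `v`
shows `Δ = D(u) + ½‖u - v‖²_P ≥ ½‖u - v‖²_P ≥ 0`, and the gradient inequality for the convex `f`
shows `D_f(u, v) ≥ 0`. The step size `θ = min 1 (Δ / (2 D_f(u, v)))` satisfies
`θ · 2 D_f(u, v) ≤ Δ`, so `θ² D_f(u, v) ≤ θ Δ / 2`, which is the claimed decrease.
-/

open RealInnerProductSpace

section

variable {H : Type*} [NormedAddCommGroup H] [InnerProductSpace ℝ H]

theorem ConvexOn.add_inner_gradient_le [CompleteSpace H] {f : H → ℝ} {f' x : H}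
    (hf : ConvexOn ℝ Set.univ f) (hx : HasGradientAt f f' x) (y : H) :
    f x + ⟪f', y - x⟫ ≤ f y := by
  let ℓ : ℝ →ᵃ[ℝ] H := AffineMap.lineMap x y
  have hd : HasDerivAt (f ∘ ℓ) ⟪f', y - x⟫ 0 := by
    simpa using hx.hasFDerivAt.comp_hasDerivAt_of_eq 0 AffineMap.hasDerivAt_lineMap
      (AffineMap.lineMap_apply_zero x y).symm
  simpa [slope_def_field, ℓ, le_sub_iff_add_le'] using
    (hf.comp_affineMap ℓ).le_slope_of_hasDerivAt trivial trivial one_pos hd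

theorem half_inner_sub_map_sub_le_of_forall_le {P : H →L[ℝ] H}
    (hP : ∀ x y : H, ⟪P x, y⟫ = ⟪x, P y⟫) {g : H → ℝ} {a u v : H}
    (hv : ∀ w : H, ⟪a, v⟫ - ⟪u, P v⟫ + (1/2) * ⟪v, P v⟫ + g v ≤
      ⟪a, w⟫ - ⟪u, P w⟫ + (1/2) * ⟪w, P w⟫ + g w) :
    (1/2) * ⟪u - v, P (u - v)⟫ ≤ ⟪a, u - v⟫ + g u - g v := by
  have hsymm : ⟪v, P u⟫ = ⟪u, P v⟫ := by rw [← hP, real_inner_comm]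
  have hu := hv u
  simp only [map_sub, inner_sub_left, inner_sub_right, hsymm] at hu ⊢
  linarith

theorem add_segment_le_quadratic_model {f : H → ℝ} {f' : H → H} {g : H → ℝ} {Df : H → H → ℝ}
    (hg : ConvexOn ℝ Set.univ g)
    (hDf1 : ∀ x y : H, f y - f x - ⟪f' x, y - x⟫ ≤ Df x y)
    (hDf2 : ∀ x y : H, ∀ θ ∈ Set.Icc (0:ℝ) 1, Df x (x + θ • (y - x)) ≤ θ^2 * Df x y)
    (u v : H) {θ : ℝ} (hθ : θ ∈ Set.Icc (0:ℝ) 1) :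
    f (u + θ • (v - u)) + g (u + θ • (v - u)) ≤
      f u + g u - θ * (⟪f' u, u - v⟫ + g u - g v) + θ^2 * Df u v := by
  have hinner : ⟪f' u, v - u⟫ = -⟪f' u, u - v⟫ := by rw [← inner_neg_right, neg_sub]
  have hf := (hDf1 u (u + θ • (v - u))).trans (hDf2 u v θ hθ)
  rw [add_sub_cancel_left, real_inner_smul_right, hinner] at hf
  have hgθ : g (u + θ • (v - u)) ≤ (1 - θ) • g u + θ • g v := by
    rw [show u + θ • (v - u) = (1 - θ) • u + θ • v by module]
    exact hg.2 (Set.mem_univ u) (Set.mem_univ v) (sub_nonneg.2 hθ.2) hθ.1 (sub_add_cancel 1 θ)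
  rw [smul_eq_mul, smul_eq_mul] at hgθ
  linarith

end

theorem sq_min_one_div_mul_le {Δ d : ℝ} (hΔ : 0 ≤ Δ) (hd : 0 ≤ d) :
    min 1 (Δ / (2 * d)) ^ 2 * d ≤ min 1 (Δ / (2 * d)) / 2 * Δ := by
  set t := min 1 (Δ / (2 * d))
  have ht : 0 ≤ t := le_min zero_le_one (by positivity)
  have htd : t * (2 * d) ≤ Δ := by
    rcases hd.eq_or_lt with rfl | hd
    · simpa using hΔ
    · exact (le_div_iff₀ (by positivity)).1 (min_le_right _ _)
  nlinarith

theorem hpgcg_lemma2_general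
    {H : Type*} [NormedAddCommGroup H] [InnerProductSpace ℝ H] [CompleteSpace H]
    (f : H → ℝ) (f' : H → H) (g : H → ℝ) (P : H →L[ℝ] H) (L : NNReal)
    (Df : H → H → ℝ)
    (hf : ConvexOn ℝ Set.univ f)
    (hf' : ∀ x, HasGradientAt f (f' x) x)
    (hg : ConvexOn ℝ Set.univ g)
    (hP_sa : ∀ x y : H, ⟪P x, y⟫ = ⟪x, P y⟫)
    (hP_pos : ∀ x : H, 0 ≤ ⟪x, P x⟫)
    -- the three standing properties of D_f
    (hDf1 : ∀ x y : H, f y - f x - ⟪f' x, y - x⟫ ≤ Df x y)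
    (hDf2 : ∀ x y : H, ∀ θ ∈ Set.Icc (0:ℝ) 1, Df x (x + θ • (y - x)) ≤ θ^2 * Df x y)
    (ustar : H)
    -- the HPGCG iteration
    (u v : ℕ → H) (θ : ℕ → ℝ)
    (D : ℕ → ℝ)
    (hD : ∀ k, D k = ⟪f' (u k), u k - v k⟫ + g (u k) - g (v k)
        - (1/2) * ⟪u k - v k, P (u k - v k)⟫)
    (hv : ∀ k, ∀ w : H,
      ⟪f' (u k), v k⟫ - ⟪u k, P (v k)⟫ + (1/2) * ⟪v k, P (v k)⟫ + g (v k) ≤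
      ⟪f' (u k), w⟫ - ⟪u k, P w⟫ + (1/2) * ⟪w, P w⟫ + g w)
    (hθ : ∀ k, θ k = min 1
      ((D k + (1/2) * ⟪u k - v k, P (u k - v k)⟫) / (2 * Df (u k) (v k))))
    (hupd : ∀ k, u (k + 1) = u k + θ k • (v k - u k)) :
    ∀ k : ℕ,
      (f (u (k+1)) + g (u (k+1)) - (f ustar + g ustar))
        - (f (u k) + g (u k) - (f ustar + g ustar)) ≤
      - (θ k / 2) * (D k + (1/2) * ⟪u k - v k, P (u k - v k)⟫) := by
  intro k
  set Δ := ⟪f' (u k), u k - v k⟫ + g (u k) - g (v k)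
  have hDΔ : D k + (1/2) * ⟪u k - v k, P (u k - v k)⟫ = Δ := by rw [hD k]; ring
  have hΔ : 0 ≤ Δ := by
    linarith [hP_pos (u k - v k), half_inner_sub_map_sub_le_of_forall_le hP_sa (hv k)]
  have hDf : 0 ≤ Df (u k) (v k) := by
    linarith [hf.add_inner_gradient_le (hf' (u k)) (v k), hDf1 (u k) (v k)]
  have hθΔ : θ k = min 1 (Δ / (2 * Df (u k) (v k))) := by rw [hθ k, hDΔ]
  have hθ01 : θ k ∈ Set.Icc (0:ℝ) 1 :=
    ⟨hθΔ ▸ le_min zero_le_one (by positivity), hθΔ ▸ min_le_left _ _⟩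
  have hdescent := add_segment_le_quadratic_model hg hDf1 hDf2 (u k) (v k) hθ01
  have hstep := sq_min_one_div_mul_le hΔ hDf
  rw [← hθΔ] at hstep
  rw [hupd k, hDΔ]
  linarith

/-- Lemma 2 of the HPGCG analysis (sufficient decrease). -/
theorem hpgcg_lemma2
    {H : Type*} [NormedAddCommGroup H] [InnerProductSpace ℝ H] [CompleteSpace H]
    (f : H → ℝ) (f' : H → H) (g : H → ℝ) (P : H →L[ℝ] H) (L : NNReal)
    (Df : H → H → ℝ)
    (hf : ConvexOn ℝ Set.univ f)
    (hf' : ∀ x, HasGradientAt f (f' x) x)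
    (hf'_lip : LipschitzWith L f')
    (hg : ConvexOn ℝ Set.univ g)
    (hg_lsc : LowerSemicontinuous g)
    (hP_sa : ∀ x y : H, ⟪P x, y⟫ = ⟪x, P y⟫)
    (hP_pos : ∀ x : H, 0 ≤ ⟪x, P x⟫)
    -- the three standing properties of D_f
    (hDf1 : ∀ x y : H, f y - f x - ⟪f' x, y - x⟫ ≤ Df x y)
    (hDf2 : ∀ x y : H, ∀ θ ∈ Set.Icc (0:ℝ) 1, Df x (x + θ • (y - x)) ≤ θ^2 * Df x y)
    (hDf3 : ∀ s : Set H, Bornology.IsBounded s → ∃ M, ∀ x ∈ s, ∀ y ∈ s, Df x y ≤ M)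
    -- u* is a minimizer of f + g (so that r(u) = (f+g)(u) − inf(f+g))
    (ustar : H) (hustar : ∀ w : H, f ustar + g ustar ≤ f w + g w)
    -- the HPGCG iteration
    (u v : ℕ → H) (θ : ℕ → ℝ)
    (D : ℕ → ℝ)
    (hD : ∀ k, D k = ⟪f' (u k), u k - v k⟫ + g (u k) - g (v k)
        - (1/2) * ⟪u k - v k, P (u k - v k)⟫)
    (hv : ∀ k, ∀ w : H,
      ⟪f' (u k), v k⟫ - ⟪u k, P (v k)⟫ + (1/2) * ⟪v k, P (v k)⟫ + g (v k) ≤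
      ⟪f' (u k), w⟫ - ⟪u k, P w⟫ + (1/2) * ⟪w, P w⟫ + g w)
    (hθ : ∀ k, θ k = min 1
      ((D k + (1/2) * ⟪u k - v k, P (u k - v k)⟫) / (2 * Df (u k) (v k))))
    (hupd : ∀ k, u (k + 1) = u k + θ k • (v k - u k)) :
    ∀ k : ℕ,
      (f (u (k+1)) + g (u (k+1)) - (f ustar + g ustar))
        - (f (u k) + g (u k) - (f ustar + g ustar)) ≤
      - (θ k / 2) * (D k + (1/2) * ⟪u k - v k, P (u k - v k)⟫) :=
  hpgcg_lemma2_general f f' g P L Df hf hf' hg hP_sa hP_pos hDf1 hDf2 ustar u v θ D hD hv hθ hupd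
end

section
/- Let f(u) = (1/2)‖u − ξ‖² and g_α(v) = α‖v‖_{1,2}, and let G_α(u,v) = f(u) + g_α(∇u) + f*(∇·v) + g_α*(v) be the primal-dual gap for the ROF problem. Then for every noise-free image u† ∈ ℝⁿ, min over v of G_α(u†, v) is attained at v^α (the dual solution) and min_v G_α(u†, v) = (1/2)‖u† − u^α‖² + D^{g_α}_{v^α}(∇u†, ∇u^α) ≥ (1/2)‖u† − u^α‖², where u^α is the ROF solution with data ξ and parameter α. -/
/-!
The gap splits into two Fenchel–Young gaps, because `⟪u†, -∇*vα⟫ + ⟪∇u†, vα⟫ = 0`.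
For the quadratic fidelity `f` the Fenchel–Young gap at `(u†, p)` is `½‖u† - (p + ξ)‖²`, and
`p + ξ = uα` for `p = -∇*vα` by the first optimality condition. For `gα` it is
`gα(∇u†) - ⟪vα, ∇u†⟫`, which is the Bregman divergence at `∇uα` because the normal-cone
condition forces `gα(∇uα) = ⟪vα, ∇uα⟫`; it is nonnegative since `vα` lies in the dual ball.
Minimality of `vα` is the same normal-cone condition read through the adjoint.
-/

open RealInnerProductSpace

section InnerProductSpace

variable {E F : Type*} [NormedAddCommGroup E] [InnerProductSpace ℝ E]
  [NormedAddCommGroup F] [InnerProductSpace ℝ F]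

theorem half_norm_sub_sq_add_conj_sub_inner (x p ξ : E) :
    (1/2) * ‖x - ξ‖^2 + ((1/2) * ‖p + ξ‖^2 - (1/2) * ‖ξ‖^2) - ⟪x, p⟫ =
      (1/2) * ‖x - (p + ξ)‖^2 := by
  rw [norm_sub_sq_real, norm_sub_sq_real, norm_add_sq_real, inner_add_right]
  ring

theorem norm_le_norm_add_of_inner_nonneg {x y : E} (h : 0 ≤ ⟪x, y⟫) : ‖x‖ ≤ ‖x + y‖ := by
  refine (pow_le_pow_iff_left₀ (norm_nonneg _) (norm_nonneg _) two_ne_zero).mp ?_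
  rw [norm_add_sq_real]
  nlinarith [sq_nonneg ‖y‖]

theorem norm_neg_adjoint_add_le_of_inner_sub_nonpos [CompleteSpace E] [CompleteSpace F]
    {A : E →L[ℝ] F} {u ξ : E} {v₀ v : F} (h₀ : -(A.adjoint v₀) = u - ξ)
    (hv : ⟪A u, v - v₀⟫ ≤ 0) :
    ‖-(A.adjoint v₀) + ξ‖ ≤ ‖-(A.adjoint v) + ξ‖ := by
  have hsplit : -(A.adjoint v) + ξ = (-(A.adjoint v₀) + ξ) + A.adjoint (v₀ - v) := by
    rw [map_sub]; abel
  rw [hsplit]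
  apply norm_le_norm_add_of_inner_nonneg
  rw [h₀, sub_add_cancel, ContinuousLinearMap.adjoint_inner_right, ← neg_sub v,
    inner_neg_right]
  linarith

end InnerProductSpace

namespace PiLp

variable {ι : Type*} [Fintype ι] {E : ι → Type*} [∀ i, NormedAddCommGroup (E i)]
  [∀ i, InnerProductSpace ℝ (E i)]

theorem inner_le_mul_sum_norm {α : ℝ} {v : PiLp 2 E} (hv : ∀ i, ‖v i‖ ≤ α) (z : PiLp 2 E) :
    ⟪v, z⟫ ≤ α * ∑ i, ‖z i‖ := by
  rw [PiLp.inner_apply, Finset.mul_sum]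
  gcongr with i
  calc ⟪v i, z i⟫ ≤ ‖v i‖ * ‖z i‖ := real_inner_le_norm _ _
    _ ≤ α * ‖z i‖ := by gcongr; exact hv i

theorem exists_inner_eq_mul_sum_norm {α : ℝ} (hα : 0 ≤ α) (z : PiLp 2 E) :
    ∃ w : PiLp 2 E, (∀ i, ‖w i‖ ≤ α) ∧ ⟪z, w⟫ = α * ∑ i, ‖z i‖ := by
  refine ⟨WithLp.toLp 2 fun i => (α * ‖z i‖⁻¹) • z i, fun i => ?_, ?_⟩
  · by_cases hz : z i = 0
    · simp [hz, hα]
    · rw [PiLp.toLp_apply, norm_smul, Real.norm_of_nonneg (by positivity), mul_assoc,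
        inv_mul_cancel₀ (norm_ne_zero_iff.mpr hz), mul_one]
  · rw [PiLp.inner_apply, Finset.mul_sum]
    refine Finset.sum_congr rfl fun i _ => ?_
    rw [PiLp.toLp_apply, real_inner_smul_right, real_inner_self_eq_norm_sq]
    by_cases hz : z i = 0
    · simp [hz]
    · field_simp [norm_ne_zero_iff.mpr hz]

theorem inner_eq_mul_sum_norm_of_mem_normalCone {α : ℝ} (hα : 0 ≤ α) {z v₀ : PiLp 2 E}
    (hv₀ : ∀ i, ‖v₀ i‖ ≤ α) (hz : ∀ w : PiLp 2 E, (∀ i, ‖w i‖ ≤ α) → ⟪z, w - v₀⟫ ≤ 0) :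
    ⟪v₀, z⟫ = α * ∑ i, ‖z i‖ := by
  obtain ⟨w, hw, hzw⟩ := exists_inner_eq_mul_sum_norm hα z
  have hnormal := hz w hw
  rw [inner_sub_right, hzw, real_inner_comm] at hnormal
  linarith [inner_le_mul_sum_norm hv₀ z]

end PiLp

theorem rof_gap_majorizes_squared_distance_general
    {n : ℕ} (α : ℝ) (hα : 0 < α)
    (ξ udag uα : EuclideanSpace ℝ (Fin n))
    (vα : PiLp 2 fun _ : Fin n => EuclideanSpace ℝ (Fin 2))
    (grad : EuclideanSpace ℝ (Fin n) →L[ℝ]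
      PiLp 2 fun _ : Fin n => EuclideanSpace ℝ (Fin 2))
    (f fs : EuclideanSpace ℝ (Fin n) → ℝ)
    (gα : (PiLp 2 fun _ : Fin n => EuclideanSpace ℝ (Fin 2)) → ℝ)
    (hf : ∀ x, f x = (1/2) * ‖x - ξ‖^2)
    (hfs : ∀ x, fs x = (1/2) * ‖x + ξ‖^2 - (1/2) * ‖ξ‖^2)
    (hgα : ∀ v, gα v = α * ∑ i, ‖v i‖)
    -- vα is dual feasible and (uα, vα) satisfies the optimality system
    (hvα_feas : ∀ i, ‖vα i‖ ≤ α)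
    (hopt₁ : -(ContinuousLinearMap.adjoint grad vα) = uα - ξ)
    -- ∇uα ∈ ∂gα*(vα): normal-cone inequality for the indicator of the ball
    (hopt₂ : ∀ w, (∀ i, ‖w i‖ ≤ α) → ⟪grad uα, w - vα⟫ ≤ 0) :
    -- the minimum over feasible v of the gap is attained at vα ...
    (∀ v, (∀ i, ‖v i‖ ≤ α) →
      f udag + gα (grad udag) + fs (-(ContinuousLinearMap.adjoint grad vα)) ≤
      f udag + gα (grad udag) + fs (-(ContinuousLinearMap.adjoint grad v))) ∧
    -- ... equals (1/2)‖u† − uα‖² plus the Bregman divergence of gα ...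
    (f udag + gα (grad udag) + fs (-(ContinuousLinearMap.adjoint grad vα)) =
      (1/2) * ‖udag - uα‖^2
        + (gα (grad udag) - gα (grad uα) - ⟪vα, grad udag - grad uα⟫)) ∧
    -- ... and hence majorizes (1/2)‖u† − uα‖²
    ((1/2) * ‖udag - uα‖^2 ≤
      f udag + gα (grad udag) + fs (-(ContinuousLinearMap.adjoint grad vα))) := by
  have hg_uα : gα (grad uα) = ⟪vα, grad uα⟫ := by
    rw [hgα, PiLp.inner_eq_mul_sum_norm_of_mem_normalCone hα.le hvα_feas hopt₂]
  have hg_udag : ⟪vα, grad udag⟫ ≤ gα (grad udag) := by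
    rw [hgα]; exact PiLp.inner_le_mul_sum_norm hvα_feas _
  have hfenchel_f : f udag + fs (-(grad.adjoint vα)) - ⟪udag, -(grad.adjoint vα)⟫ =
      (1/2) * ‖udag - uα‖^2 := by
    rw [hf, hfs, half_norm_sub_sq_add_conj_sub_inner, hopt₁, sub_add_cancel]
  have hcoupling : ⟪udag, -(grad.adjoint vα)⟫ = -⟪vα, grad udag⟫ := by
    rw [inner_neg_right, ContinuousLinearMap.adjoint_inner_right, real_inner_comm]
  have hgap : f udag + gα (grad udag) + fs (-(grad.adjoint vα)) =
      (1/2) * ‖udag - uα‖^2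
        + (gα (grad udag) - gα (grad uα) - ⟪vα, grad udag - grad uα⟫) := by
    rw [inner_sub_right, hg_uα]
    linarith
  refine ⟨fun v hv => ?_, hgap, ?_⟩
  · have hdual := norm_neg_adjoint_add_le_of_inner_sub_nonpos hopt₁ (hopt₂ v hv)
    rw [hfs, hfs]
    gcongr
  · rw [hgap, inner_sub_right, hg_uα]
    linarith

/-- for the ROF problem, for every noise-free image u†,
min over feasible v of the primal–dual gap G_α(u†, v) is attained at the dual
solution vα, and equals (1/2)‖u† − uα‖² + D^{gα}_{vα}(∇u†, ∇uα), which is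
≥ (1/2)‖u† − uα‖².  Here `grad` is the discrete gradient, the divergence is
∇· = −grad*, Gap u v = f(u) + gα(∇u) + f*(∇·v) + gα*(v), and on the feasible
set {v : ‖v‖_{∞,2} ≤ α} the indicator gα* vanishes. -/
theorem rof_gap_majorizes_squared_distance
    {n : ℕ} (α : ℝ) (hα : 0 < α)
    (ξ udag uα : EuclideanSpace ℝ (Fin n))
    (vα : PiLp 2 fun _ : Fin n => EuclideanSpace ℝ (Fin 2))
    (grad : EuclideanSpace ℝ (Fin n) →L[ℝ]
      PiLp 2 fun _ : Fin n => EuclideanSpace ℝ (Fin 2))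
    (f fs : EuclideanSpace ℝ (Fin n) → ℝ)
    (gα : (PiLp 2 fun _ : Fin n => EuclideanSpace ℝ (Fin 2)) → ℝ)
    (hf : ∀ x, f x = (1/2) * ‖x - ξ‖^2)
    (hfs : ∀ x, fs x = (1/2) * ‖x + ξ‖^2 - (1/2) * ‖ξ‖^2)
    (hgα : ∀ v, gα v = α * ∑ i, ‖v i‖)
    -- uα solves the ROF (primal) problem with data ξ and parameter α
    (huα : ∀ w, f uα + gα (grad uα) ≤ f w + gα (grad w))
    -- vα is dual feasible and (uα, vα) satisfies the optimality system
    (hvα_feas : ∀ i, ‖vα i‖ ≤ α)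
    (hopt₁ : -(ContinuousLinearMap.adjoint grad vα) = uα - ξ)
    -- ∇uα ∈ ∂gα*(vα): normal-cone inequality for the indicator of the ball
    (hopt₂ : ∀ w, (∀ i, ‖w i‖ ≤ α) → ⟪grad uα, w - vα⟫ ≤ 0) :
    -- the minimum over feasible v of the gap is attained at vα ...
    (∀ v, (∀ i, ‖v i‖ ≤ α) →
      f udag + gα (grad udag) + fs (-(ContinuousLinearMap.adjoint grad vα)) ≤
      f udag + gα (grad udag) + fs (-(ContinuousLinearMap.adjoint grad v))) ∧
    -- ... equals (1/2)‖u† − uα‖² plus the Bregman divergence of gα ...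
    (f udag + gα (grad udag) + fs (-(ContinuousLinearMap.adjoint grad vα)) =
      (1/2) * ‖udag - uα‖^2
        + (gα (grad udag) - gα (grad uα) - ⟪vα, grad udag - grad uα⟫)) ∧
    -- ... and hence majorizes (1/2)‖u† − uα‖²
    ((1/2) * ‖udag - uα‖^2 ≤
      f udag + gα (grad udag) + fs (-(ContinuousLinearMap.adjoint grad vα))) :=
  rof_gap_majorizes_squared_distance_general α hα ξ udag uα vα grad f fs gα hf hfs hgα hvα_feas
    hopt₁ hopt₂
end
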